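/- Let 0 < a ≤ 1 and let E ⊆ 𝕋 be an open subset of the circle that is the union of pairwise disjoint open arcs with lengths exactly l_k = a·2^{−k} for k = 1, 2, 3, …. Then for every h with 0 < h ≤ a/2, τ(h,E) ≤ 2h·log₂(a/h) + 2h; in particular τ(h,E) = O(h·log(1/h)) as h → 0+. -/

import Mathlib

open MeasureTheory Set

/-- `τ(h,E)`: the measure of the set where the characteristic function of `E`
translated by `h` differs from itself. -/
noncomputable def tau (h : ℝ) (E : Set (AddCircle (1:ℝ))) : ℝ :=
  (volume {x : AddCircle (1:ℝ) |
    E.indicator (fun _ => (1:ℝ)) (x + ((h : ℝ) : AddCircle (1:ℝ)))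
      ≠ E.indicator (fun _ => (1:ℝ)) x}).toReal

/-- The open arc of the circle which is the image of the interval `(a, a+l)`. -/
noncomputable def arc (a l : ℝ) : Set (AddCircle (1:ℝ)) :=
  (fun r : ℝ => (r : AddCircle (1:ℝ))) '' Set.Ioo a (a + l)

/-!
Translating an arc of length `l` by `h` moves at most `2 min(h, l)` of its measure, and the
set where `χ_E` and its translate differ lies in the union of the corresponding sets of the
arcs, so `τ(h, E) ≤ 2 ∑ₖ min(h, a 2^{-k})`. With `L = log₂(a/h)` and `K = ⌊L⌋`, the first `K`
terms are at most `h` each and the others form a geometric series of sum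
`a 2^{-K} = h 2^{L-K} ≤ h (1 + L - K)`, by convexity of `2^t` on `[0, 1]`.
-/

open scoped symmDiff

theorem AddCircle.volume_image_coe_Icc_le {T : ℝ} [Fact (0 < T)] (u v : ℝ) :
    volume (((↑) : ℝ → AddCircle T) '' Icc u v) ≤ ENNReal.ofReal (v - u) := by
  have hball : ((↑) : ℝ → AddCircle T) '' Icc u v ⊆
      Metric.closedBall (((u + v) / 2 : ℝ) : AddCircle T) ((v - u) / 2) := by
    rintro _ ⟨r, hr, rfl⟩
    rw [Metric.mem_closedBall, dist_eq_norm, ← AddCircle.coe_sub]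
    refine QuotientAddGroup.norm_mk_le_norm.trans ?_
    rw [Real.norm_eq_abs, abs_le]
    constructor <;> linarith [hr.1, hr.2]
  calc _ ≤ _ := measure_mono hball
    _ = ENNReal.ofReal (min T (2 * ((v - u) / 2))) := AddCircle.volume_closedBall _ _
    _ ≤ ENNReal.ofReal (v - u) :=
        ENNReal.ofReal_le_ofReal (by linarith [min_le_right T (2 * ((v - u) / 2))])

theorem tau_eq_volume_symmDiff (h : ℝ) (E : Set (AddCircle (1:ℝ))) :
    tau h E = (volume (((· + (h : AddCircle (1:ℝ))) ⁻¹' E) ∆ E)).toReal := by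
  unfold tau
  congr 2
  ext x
  by_cases hx : x ∈ E <;> by_cases hxh : x + (h : AddCircle (1:ℝ)) ∈ E <;>
    simp [hx, hxh, mem_symmDiff]

theorem preimage_add_arc (h c l : ℝ) :
    (· + (h : AddCircle (1:ℝ))) ⁻¹' arc c l = arc (c - h) l := by
  rw [arc, arc, ← neg_neg (h : AddCircle (1:ℝ)), ← image_add_right, image_image,
    ← AddCircle.coe_neg]
  simp_rw [← AddCircle.coe_add]
  rw [← image_image (fun r : ℝ => (r : AddCircle (1:ℝ))) (· + -h), image_add_const_Ioo]
  ring_nf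

theorem Set.image_sdiff_image_subset {α β : Type*} (f : α → β) (s t : Set α) :
    f '' s \ f '' t ⊆ f '' (s \ t) :=
  fun _ ⟨⟨r, hr, e⟩, hn⟩ => ⟨r, ⟨hr, fun ht => hn ⟨r, ht, e⟩⟩, e⟩

theorem volume_preimage_add_symmDiff_arc_le {h l : ℝ} (hh : 0 ≤ h) (hl : 0 ≤ l) (c : ℝ) :
    volume (((· + (h : AddCircle (1:ℝ))) ⁻¹' arc c l) ∆ arc c l) ≤
      ENNReal.ofReal (2 * min h l) := by
  rw [preimage_add_arc, Set.symmDiff_def]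
  have hleft : Ioo (c - h) (c - h + l) \ Ioo c (c + l) ⊆ Icc (c - h) (c - h + min h l) := by
    rintro r ⟨⟨h1, h2⟩, h3⟩
    simp only [mem_Ioo, not_and_or, not_lt] at h3
    refine ⟨h1.le, ?_⟩
    rcases min_cases h l with ⟨hm, _⟩ | ⟨hm, _⟩ <;> rw [hm] <;>
      rcases h3 with h3 | h3 <;> linarith
  have hright : Ioo c (c + l) \ Ioo (c - h) (c - h + l) ⊆ Icc (c + l - min h l) (c + l) := by
    rintro r ⟨⟨h1, h2⟩, h3⟩
    simp only [mem_Ioo, not_and_or, not_lt] at h3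
    refine ⟨?_, h2.le⟩
    rcases min_cases h l with ⟨hm, _⟩ | ⟨hm, _⟩ <;> rw [hm] <;>
      rcases h3 with h3 | h3 <;> linarith
  calc _ ≤ volume (arc (c - h) l \ arc c l) + volume (arc c l \ arc (c - h) l) :=
        measure_union_le _ _
    _ ≤ ENNReal.ofReal (min h l) + ENNReal.ofReal (min h l) := by
        gcongr
        · refine (measure_mono ((image_sdiff_image_subset _ _ _).trans
            (image_mono hleft))).trans ?_
          exact (AddCircle.volume_image_coe_Icc_le _ _).trans_eq (by congr 1; ring)
        · refine (measure_mono ((image_sdiff_image_subset _ _ _).trans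
            (image_mono hright))).trans ?_
          exact (AddCircle.volume_image_coe_Icc_le _ _).trans_eq (by congr 1; ring)
    _ = ENNReal.ofReal (2 * min h l) := by
        rw [← ENNReal.ofReal_add (by positivity) (by positivity), two_mul]

theorem tau_iUnion_arc_le {h : ℝ} (hh : 0 ≤ h) (c l : ℕ → ℝ) (hl : ∀ k, 0 ≤ l k)
    (hs : Summable l) :
    tau h (⋃ k, arc (c k) (l k)) ≤ 2 * ∑' k, min h (l k) := by
  have hterm_nonneg (k : ℕ) : 0 ≤ 2 * min h (l k) := mul_nonneg zero_le_two (le_min hh (hl k))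
  have hterm : Summable fun k => 2 * min h (l k) :=
    (hs.of_nonneg_of_le (fun k => le_min hh (hl k)) fun k => min_le_right _ _).mul_left 2
  rw [tau_eq_volume_symmDiff, ← tsum_mul_left]
  refine ENNReal.toReal_le_of_le_ofReal (tsum_nonneg hterm_nonneg) ?_
  rw [preimage_iUnion]
  calc _ ≤ ∑' k, ENNReal.ofReal (2 * min h (l k)) :=
        (measure_mono iUnion_symmDiff_iUnion_subset).trans <| (measure_iUnion_le _).trans <|
          ENNReal.tsum_le_tsum fun k => volume_preimage_add_symmDiff_arc_le hh (hl k) (c k)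
    _ = ENNReal.ofReal (∑' k, 2 * min h (l k)) :=
        (ENNReal.ofReal_tsum_of_nonneg hterm_nonneg hterm).symm

theorem tsum_min_geometric_le {h a : ℝ} (hh : 0 ≤ h) (ha : 0 ≤ a) (K : ℕ) :
    ∑' k : ℕ, min h (a * 2⁻¹ ^ (k + 1)) ≤ h * K + a * 2⁻¹ ^ K := by
  have hgeom : HasSum (fun j : ℕ => a * 2⁻¹ ^ (j + K + 1)) (a * 2⁻¹ ^ K) := by
    convert hasSum_geometric_two' (a * 2⁻¹ ^ K) using 2 with j
    rw [pow_succ, pow_add, inv_pow 2 j]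
    ring
  have hs : Summable fun k : ℕ => min h (a * 2⁻¹ ^ (k + 1)) :=
    ((summable_geometric_two.mul_left (a / 2)).of_nonneg_of_le
      (fun k => le_min hh (by positivity))
      fun k => (min_le_right _ _).trans_eq (by rw [pow_succ]; ring))
  rw [← hs.sum_add_tsum_nat_add K]
  gcongr
  · calc _ ≤ ∑ _k ∈ Finset.range K, h := Finset.sum_le_sum fun k _ => min_le_left _ _
      _ = h * K := by simp [mul_comm]
  · exact hasSum_le (fun j => min_le_right _ _) ((summable_nat_add_iff K).2 hs).hasSum hgeom

theorem natFloor_add_two_rpow_sub_natFloor_le {L : ℝ} (hL : 0 ≤ L) :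
    (⌊L⌋₊ : ℝ) + 2 ^ (L - ⌊L⌋₊) ≤ L + 1 := by
  have h0 : 0 ≤ L - ⌊L⌋₊ := sub_nonneg.2 (Nat.floor_le hL)
  have h1 : L - ⌊L⌋₊ ≤ 1 := by linarith [Nat.lt_floor_add_one L]
  have := rpow_one_add_le_one_add_mul_self (by norm_num : (-1:ℝ) ≤ 1) h0 h1
  norm_num at this
  linarith

theorem tsum_min_geometric_le_logb {h a : ℝ} (hh : 0 < h) (hha : h ≤ a) :
    ∑' k : ℕ, min h (a * 2⁻¹ ^ (k + 1)) ≤ h * Real.logb 2 (a / h) + h := by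
  set L := Real.logb 2 (a / h)
  have hL : 0 ≤ L := Real.logb_nonneg one_lt_two ((one_le_div hh).2 hha)
  have h2L : (2:ℝ) ^ L = a / h :=
    Real.rpow_logb two_pos (by norm_num) (div_pos (hh.trans_le hha) hh)
  have hscale : a * 2⁻¹ ^ ⌊L⌋₊ = h * 2 ^ (L - ⌊L⌋₊) := by
    rw [Real.rpow_sub two_pos, h2L, Real.rpow_natCast, inv_pow]
    field_simp
  calc _ ≤ h * ⌊L⌋₊ + a * 2⁻¹ ^ ⌊L⌋₊ := tsum_min_geometric_le hh.le (hh.le.trans hha) _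
    _ = h * (⌊L⌋₊ + 2 ^ (L - ⌊L⌋₊)) := by rw [hscale]; ring
    _ ≤ h * (L + 1) :=
        mul_le_mul_of_nonneg_left (natFloor_add_two_rpow_sub_natFloor_le hL) hh.le
    _ = h * L + h := by ring

theorem two_mul_logb_add_two_mul_le {a h : ℝ} (ha : 0 < a) (ha' : a ≤ 1) (hh : 0 < h)
    (hhe : h ≤ Real.exp (-1)) :
    2 * h * Real.logb 2 (a / h) + 2 * h ≤ (2 / Real.log 2 + 2) * (h * Real.log (1 / h)) := by
  have hlog2 : 0 < Real.log 2 := Real.log_pos one_lt_two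
  have hlog : 1 ≤ Real.log (1 / h) := by
    rw [one_div, Real.log_inv, le_neg, ← Real.log_exp (-1)]
    exact Real.log_le_log hh hhe
  have hlogb : Real.logb 2 (a / h) ≤ Real.log (1 / h) / Real.log 2 := by
    rw [Real.logb, div_eq_mul_one_div a, Real.log_mul ha.ne' (by positivity)]
    gcongr
    linarith [Real.log_nonpos ha.le ha']
  calc _ ≤ 2 * h * (Real.log (1 / h) / Real.log 2) + 2 * h * Real.log (1 / h) :=
        add_le_add (mul_le_mul_of_nonneg_left hlogb (by positivity))
          (le_mul_of_one_le_right (by positivity) hlog)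
    _ = _ := by field_simp

theorem stmt_14_general (a : ℝ) (ha : 0 < a) (ha' : a ≤ 1) (c : ℕ → ℝ)
    (E : Set (AddCircle (1:ℝ)))
    (hE : E = ⋃ k : ℕ, arc (c k) (a * (2:ℝ)⁻¹ ^ (k + 1))) :
    (∀ h : ℝ, 0 < h → h ≤ a / 2 →
        tau h E ≤ 2 * h * Real.logb 2 (a / h) + 2 * h) ∧
    ∃ C > 0, ∃ δ > 0, ∀ h : ℝ, 0 < h → h ≤ δ →
        tau h E ≤ C * (h * Real.log (1 / h)) := by
  have hsum : Summable fun k : ℕ => a * (2:ℝ)⁻¹ ^ (k + 1) :=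
    (summable_nat_add_iff 1).2
      ((summable_geometric_of_lt_one (by norm_num) (by norm_num)).mul_left a)
  have hbound (h : ℝ) (hh : 0 < h) (hha : h ≤ a / 2) :
      tau h E ≤ 2 * h * Real.logb 2 (a / h) + 2 * h := by
    subst hE
    calc _ ≤ 2 * ∑' k : ℕ, min h (a * (2:ℝ)⁻¹ ^ (k + 1)) :=
          tau_iUnion_arc_le hh.le c _ (fun k => by positivity) hsum
      _ ≤ 2 * (h * Real.logb 2 (a / h) + h) := by
          gcongr
          exact tsum_min_geometric_le_logb hh (by linarith)
      _ = _ := by ring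
  have hlog2 : 0 < Real.log 2 := Real.log_pos one_lt_two
  refine ⟨hbound, 2 / Real.log 2 + 2, by positivity, min (a / 2) (Real.exp (-1)),
    lt_min (half_pos ha) (Real.exp_pos _), fun h hh hδ => ?_⟩
  exact (hbound h hh (hδ.trans (min_le_left _ _))).trans
    (two_mul_logb_add_two_mul_le ha ha' hh (hδ.trans (min_le_right _ _)))

/-- If `0 < a ≤ 1` and `E ⊆ 𝕋` is the union of pairwise disjoint open
arcs of lengths `a·2^{-k}`, `k = 1, 2, …`, then `τ(h,E) ≤ 2h·log₂(a/h) + 2h` for every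
`0 < h ≤ a/2`; in particular `τ(h,E) = O(h·log(1/h))` as `h → 0⁺`. -/
theorem stmt_14 (a : ℝ) (ha : 0 < a) (ha' : a ≤ 1) (c : ℕ → ℝ)
    (E : Set (AddCircle (1:ℝ)))
    (hE : E = ⋃ k : ℕ, arc (c k) (a * (2:ℝ)⁻¹ ^ (k + 1)))
    (hdisj : Pairwise (Function.onFun Disjoint
      (fun k : ℕ => arc (c k) (a * (2:ℝ)⁻¹ ^ (k + 1))))) :
    (∀ h : ℝ, 0 < h → h ≤ a / 2 →
        tau h E ≤ 2 * h * Real.logb 2 (a / h) + 2 * h) ∧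
    ∃ C > 0, ∃ δ > 0, ∀ h : ℝ, 0 < h → h ≤ δ →
        tau h E ≤ C * (h * Real.log (1 / h)) :=
  stmt_14_general a ha ha' c E hE
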